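/- arXiv:1111.0952 — 11 statements merged into one kernel-verified Lean document; each statement's English description precedes it below -/
import Mathlib

section
/- Let M be a nonnegative n×m real matrix with rank(M) = r. Then the following are equivalent: (i) there exist a nonnegative n×r matrix A and a nonnegative r×m matrix W with M = A·W; (ii) for every n×r matrix U whose columns form a basis of the column space of M and every m×r matrix V whose columns form a basis of the row space of M, letting M_C be the unique r×m matrix with U·M_C = M and M_R the unique n×r matrix with M_R·Vᵀ = M, there exist r×r real matrices T_C and T_R such that T_C·M_C and M_R·T_R are nonnegative matrices and M_R·T_R·T_C·M_C = M. -/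
open Matrix

/-! Once `rank M` equals the inner dimension of `M = A * W`, the columns of `A` span the column
space of `M` and the rows of `W` span its row space. So any factorization `M = M_R * Vᵀ` lets us
write `A = M_R * T_R`, and any `M = U * M_C` lets us write `W = T_C * M_C`; these inherit the
nonnegativity of `A` and `W`. Conversely, bases `U`, `V` of the column and row spaces always
exist, and then `M_R * T_R`, `T_C * M_C` is a simplicial factorization. -/

open Module Submodule

namespace Matrix

variable {ι κ μ ν : Type*} [Fintype κ]

section CommSemiring

variable {R : Type*} [CommSemiring R]

theorem span_range_transpose_eq_range_mulVecLin (A : Matrix ι κ R) :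
    span R (Set.range Aᵀ) = LinearMap.range A.mulVecLin :=
  (range_mulVecLin A).symm

theorem span_range_transpose_mul_le [Fintype μ] (A : Matrix ι κ R) (W : Matrix κ μ R) :
    span R (Set.range (A * W)ᵀ) ≤ span R (Set.range Aᵀ) := by
  simpa only [span_range_transpose_eq_range_mulVecLin, mulVecLin_mul] using
    LinearMap.range_comp_le_range W.mulVecLin A.mulVecLin

theorem span_range_mul_le [Fintype ι] [Fintype μ] (A : Matrix ι κ R) (W : Matrix κ μ R) :
    span R (Set.range (A * W)) ≤ span R (Set.range W) := by
  simpa only [transpose_mul, transpose_transpose] using span_range_transpose_mul_le Wᵀ Aᵀ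

theorem exists_mul_eq_of_span_range_transpose_le {U : Matrix ι κ R} {B : Matrix ι μ R}
    (h : span R (Set.range Bᵀ) ≤ span R (Set.range Uᵀ)) :
    ∃ C : Matrix κ μ R, U * C = B := by
  have hcol (j : μ) : ∃ c : κ → R, U *ᵥ c = Bᵀ j := by
    simpa only [span_range_transpose_eq_range_mulVecLin, LinearMap.mem_range, mulVecLin_apply]
      using h (subset_span ⟨j, rfl⟩)
  choose c hc using hcol
  refine ⟨(of c)ᵀ, ?_⟩
  ext i j
  simpa [mul_apply, mulVec, dotProduct] using congrFun (hc j) i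

theorem exists_mul_eq_of_span_range_le [Fintype μ] {W : Matrix κ μ R} {B : Matrix ι μ R}
    (h : span R (Set.range B) ≤ span R (Set.range W)) : ∃ C : Matrix ι κ R, C * W = B := by
  obtain ⟨C, hC⟩ := exists_mul_eq_of_span_range_transpose_le (U := Wᵀ) (B := Bᵀ)
    (by simpa only [transpose_transpose] using h)
  exact ⟨Cᵀ, by simpa only [transpose_mul, transpose_transpose] using congrArg transpose hC⟩

end CommSemiring

variable {K : Type*} [Field K]

theorem finrank_span_range_transpose (A : Matrix ι κ K) :
    finrank K (span K (Set.range Aᵀ)) = A.rank :=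
  (rank_eq_finrank_span_cols A).symm

theorem finrank_span_range [Fintype ι] (A : Matrix ι κ K) :
    finrank K (span K (Set.range A)) = A.rank :=
  (rank_eq_finrank_span_row A).symm

theorem span_range_transpose_mul_eq_of_rank_eq [Fintype ι] [Fintype μ]
    {A : Matrix ι κ K} {W : Matrix κ μ K} (h : (A * W).rank = Fintype.card κ) :
    span K (Set.range (A * W)ᵀ) = span K (Set.range Aᵀ) :=
  eq_of_le_of_finrank_le (span_range_transpose_mul_le A W) <| by
    rw [finrank_span_range_transpose, finrank_span_range_transpose, h]
    exact A.rank_le_card_width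

theorem span_range_mul_eq_of_rank_eq [Fintype ι] [Fintype μ]
    {A : Matrix ι κ K} {W : Matrix κ μ K} (h : (A * W).rank = Fintype.card κ) :
    span K (Set.range (A * W)) = span K (Set.range W) := by
  simpa only [transpose_mul, transpose_transpose] using
    span_range_transpose_mul_eq_of_rank_eq (A := Wᵀ) (W := Aᵀ)
      (by rw [← transpose_mul, rank_transpose, h])

theorem exists_mul_eq_left_of_rank_eq [Fintype ι] [Fintype μ] [Fintype ν]
    {A : Matrix ι κ K} {W : Matrix κ μ K} {B : Matrix ι ν K} {X : Matrix ν μ K}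
    (hBX : B * X = A * W) (h : (A * W).rank = Fintype.card κ) :
    ∃ T : Matrix ν κ K, B * T = A :=
  exists_mul_eq_of_span_range_transpose_le <| by
    rw [← span_range_transpose_mul_eq_of_rank_eq h, ← hBX]
    exact span_range_transpose_mul_le B X

theorem exists_mul_eq_right_of_rank_eq [Fintype ι] [Fintype μ] [Fintype ν]
    {A : Matrix ι κ K} {W : Matrix κ μ K} {Y : Matrix ι ν K} {B : Matrix ν μ K}
    (hYB : Y * B = A * W) (h : (A * W).rank = Fintype.card κ) :
    ∃ T : Matrix κ ν K, T * B = W :=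
  exists_mul_eq_of_span_range_le <| by
    rw [← span_range_mul_eq_of_rank_eq h, ← hYB]
    exact span_range_mul_le Y B

theorem exists_linearIndependent_transpose_span_eq [Fintype ι] {r : ℕ}
    (S : Submodule K (ι → K)) (hS : finrank K S = r) :
    ∃ U : Matrix ι (Fin r) K, LinearIndependent K Uᵀ ∧ span K (Set.range Uᵀ) = S := by
  let b := finBasisOfFinrankEq K S hS
  refine ⟨of fun i k => (b k : ι → K) i,
    b.linearIndependent.map' S.subtype S.ker_subtype, ?_⟩
  change span K (Set.range (S.subtype ∘ b)) = S
  rw [Set.range_comp, ← map_span, b.span_eq, Submodule.map_top, range_subtype]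

end Matrix

theorem stmt1_general {n m r : ℕ} (M : Matrix (Fin n) (Fin m) ℝ)
    (hrank : M.rank = r) :
    (∃ (A : Matrix (Fin n) (Fin r) ℝ) (W : Matrix (Fin r) (Fin m) ℝ),
        (∀ i j, 0 ≤ A i j) ∧ (∀ i j, 0 ≤ W i j) ∧ M = A * W) ↔
    (∀ (U : Matrix (Fin n) (Fin r) ℝ) (V : Matrix (Fin m) (Fin r) ℝ),
        LinearIndependent ℝ Uᵀ →
        Submodule.span ℝ (Set.range Uᵀ) = Submodule.span ℝ (Set.range Mᵀ) →
        LinearIndependent ℝ Vᵀ →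
        Submodule.span ℝ (Set.range Vᵀ) = Submodule.span ℝ (Set.range M) →
        ∀ (M_C : Matrix (Fin r) (Fin m) ℝ) (M_R : Matrix (Fin n) (Fin r) ℝ),
          U * M_C = M → M_R * Vᵀ = M →
          ∃ T_C T_R : Matrix (Fin r) (Fin r) ℝ,
            (∀ i j, 0 ≤ (T_C * M_C) i j) ∧ (∀ i j, 0 ≤ (M_R * T_R) i j) ∧
            M_R * T_R * T_C * M_C = M) := by
  constructor
  · rintro ⟨A, W, hA, hW, rfl⟩ U V - - - - M_C M_R hMC hMR
    have hrank' : (A * W).rank = Fintype.card (Fin r) := by rw [hrank, Fintype.card_fin]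
    obtain ⟨T_R, hTR⟩ := exists_mul_eq_left_of_rank_eq hMR hrank'
    obtain ⟨T_C, hTC⟩ := exists_mul_eq_right_of_rank_eq hMC hrank'
    exact ⟨T_C, T_R, hTC ▸ hW, hTR ▸ hA, by rw [Matrix.mul_assoc (M_R * T_R), hTR, hTC]⟩
  · intro h
    obtain ⟨U, hUli, hUspan⟩ := exists_linearIndependent_transpose_span_eq
      (Submodule.span ℝ (Set.range Mᵀ)) (by rw [finrank_span_range_transpose, hrank])
    obtain ⟨V, hVli, hVspan⟩ := exists_linearIndependent_transpose_span_eq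
      (Submodule.span ℝ (Set.range M)) (by rw [finrank_span_range, hrank])
    obtain ⟨M_C, hMC⟩ := exists_mul_eq_of_span_range_transpose_le hUspan.ge
    obtain ⟨M_R, hMR⟩ := exists_mul_eq_of_span_range_le hVspan.ge
    obtain ⟨T_C, T_R, hTC, hTR, hM⟩ := h U V hUli hUspan hVli hVspan M_C M_R hMC hMR
    exact ⟨M_R * T_R, T_C * M_C, hTR, hTC, by rw [← hM, Matrix.mul_assoc]⟩

/-- For a nonnegative `n × m` matrix `M` with `rank M = r`, having a
nonnegative factorization `M = A * W` of inner dimension `r` is equivalent to the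
condition on bases of the column and row spaces described in the structure lemma for
simplicial factorization. -/
theorem stmt1 {n m r : ℕ} (M : Matrix (Fin n) (Fin m) ℝ)
    (hM : ∀ i j, 0 ≤ M i j) (hrank : M.rank = r) :
    (∃ (A : Matrix (Fin n) (Fin r) ℝ) (W : Matrix (Fin r) (Fin m) ℝ),
        (∀ i j, 0 ≤ A i j) ∧ (∀ i j, 0 ≤ W i j) ∧ M = A * W) ↔
    (∀ (U : Matrix (Fin n) (Fin r) ℝ) (V : Matrix (Fin m) (Fin r) ℝ),
        LinearIndependent ℝ Uᵀ →
        Submodule.span ℝ (Set.range Uᵀ) = Submodule.span ℝ (Set.range Mᵀ) →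
        LinearIndependent ℝ Vᵀ →
        Submodule.span ℝ (Set.range Vᵀ) = Submodule.span ℝ (Set.range M) →
        ∀ (M_C : Matrix (Fin r) (Fin m) ℝ) (M_R : Matrix (Fin n) (Fin r) ℝ),
          U * M_C = M → M_R * Vᵀ = M →
          ∃ T_C T_R : Matrix (Fin r) (Fin r) ℝ,
            (∀ i j, 0 ≤ (T_C * M_C) i j) ∧ (∀ i j, 0 ≤ (M_R * T_R) i j) ∧
            M_R * T_R * T_C * M_C = M) :=
  stmt1_general M hrank
end

section
/- Let M = A·W where A is a nonnegative n×r real matrix and W is a nonnegative r×m real matrix. Fix on subsets of {1,…,r} of equal size the lexicographic order. Then there exist a nonnegative n×r matrix A' and a nonnegative r×m matrix W' such that M = A·W' and M = A'·W', and moreover: (a) for every i ∈ {1,…,m}, letting U_i be the lexicographically least element of C(A) with M_i ∈ cone(A_{U_i}) (such an element exists), the support of the column W'_i is contained in U_i; and (b) for every j ∈ {1,…,n}, letting V_j be the lexicographically least element of C(W'ᵀ) with (M^j)ᵀ ∈ cone((W'ᵀ)_{V_j}) (such an element exists), the support of the row A'^j is contained in V_j. -/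
/-!
By the conic Carathéodory theorem, each column `M_i = A W_i` is a nonnegative combination of
linearly independent columns of `A`; these extend to an element of `C(A)` whose cone contains
`M_i`, so among the finitely many such elements there is a lexicographically least one, `U_i`,
and writing `M_i` in `cone(A_{U_i})` gives the column `W'_i`. The same construction applied to
`Mᵀ = W'ᵀ Aᵀ` (with `Aᵀ ≥ 0` as right factor) produces `A'ᵀ`.
-/

open Matrix

/-- `U` indexes a maximal linearly independent set of columns of `A`
(an element of `C(A)`). -/
def MaximalIndepCols {n r : ℕ} (A : Matrix (Fin n) (Fin r) ℝ) (U : Finset (Fin r)) : Prop :=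
  LinearIndependent ℝ (fun j : U => (fun i => A i j : Fin n → ℝ)) ∧
    ∀ V : Finset (Fin r), U ⊆ V →
      LinearIndependent ℝ (fun j : V => (fun i => A i j : Fin n → ℝ)) → V = U

/-- `cone(A_U)`: nonnegative combinations of the columns of `A` indexed by `U`. -/
def Cone {n r : ℕ} (A : Matrix (Fin n) (Fin r) ℝ) (U : Finset (Fin r)) : Set (Fin n → ℝ) :=
  {x | ∃ c : Fin r → ℝ, (∀ i, 0 ≤ c i) ∧ (∀ i ∉ U, c i = 0) ∧ x = A.mulVec c}

/-- `U ⪯ V` in the lexicographic order on finite sets (comparing the increasing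
enumerations of the two sets in dictionary order). -/
def FinsetLexLE {r : ℕ} (U V : Finset (Fin r)) : Prop :=
  U = V ∨ List.Lex (· < ·) (U.sort (· ≤ ·)) (V.sort (· ≤ ·))

/-- `U` is the lexicographically least element of `C(A)` with `x ∈ cone(A_U)`. -/
def IsLexLeastBasis {n r : ℕ} (A : Matrix (Fin n) (Fin r) ℝ) (U : Finset (Fin r))
    (x : Fin n → ℝ) : Prop :=
  MaximalIndepCols A U ∧ x ∈ Cone A U ∧
    ∀ V : Finset (Fin r), MaximalIndepCols A V → x ∈ Cone A V → FinsetLexLE U V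

section Caratheodory

variable {ι K E : Type*} [Fintype ι] [Field K] [LinearOrder K] [IsStrictOrderedRing K]
  [AddCommGroup E] [Module K E] {v : ι → E}

/-- Moving from `c` along a dependence `g` until the first coordinate with `g j > 0` hits zero. -/
lemma exists_nonneg_sum_smul_eq_support_ssubset {c g : ι → K} (hc : 0 ≤ c)
    (hg : ∑ i, g i • v i = 0) (hgc : Function.support g ⊆ Function.support c)
    (hpos : ∃ j, 0 < g j) :
    ∃ c' : ι → K, 0 ≤ c' ∧ ∑ i, c' i • v i = ∑ i, c i • v i ∧
      Function.support c' ⊂ Function.support c := by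
  obtain ⟨j₀, hj₀, hmin⟩ :=
    Set.exists_min_image {j | 0 < g j} (fun j => c j / g j) (Set.toFinite _) hpos
  set t := c j₀ / g j₀
  have ht : 0 ≤ t := div_nonneg (hc j₀) (le_of_lt hj₀)
  refine ⟨c - t • g, fun j => ?_, ?_, ?_⟩
  · show 0 ≤ c j - t * g j
    rcases lt_or_ge 0 (g j) with hgj | hgj
    · have := (le_div_iff₀ hgj).mp (hmin j hgj)
      linarith
    · have hcj : 0 ≤ c j := hc j
      linarith [mul_nonpos_of_nonneg_of_nonpos ht hgj]
  · simp only [Pi.sub_apply, Pi.smul_apply, smul_eq_mul, sub_smul, mul_smul,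
      Finset.sum_sub_distrib, ← Finset.smul_sum, hg, smul_zero, sub_zero]
  · have hsub : Function.support (c - t • g) ⊆ Function.support c := fun j hj hcj => by
      have hgj : g j = 0 := not_not.mp fun h => hgc h hcj
      simp [hcj, hgj] at hj
    refine (Set.ssubset_iff_of_subset hsub).mpr ⟨j₀, hgc (ne_of_gt hj₀), ?_⟩
    simp [t, div_mul_cancel₀ _ (ne_of_gt hj₀)]

/-- Carathéodory's theorem for cones, via a representation `d` of least support. -/
theorem exists_nonneg_sum_smul_eq_linearIndepOn_support (c : ι → K) (hc : 0 ≤ c) :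
    ∃ d : ι → K, 0 ≤ d ∧ ∑ i, d i • v i = ∑ i, c i • v i ∧
      LinearIndepOn K v (Function.support d) := by
  obtain ⟨d, ⟨hd, hdc⟩, hmin⟩ :=
    (measure fun d : ι → K => (Function.support d).ncard).wf.has_min
      {d | 0 ≤ d ∧ ∑ i, d i • v i = ∑ i, c i • v i} ⟨c, hc, rfl⟩
  refine ⟨d, hd, hdc, ?_⟩
  have no_pos_dependence : ∀ g : ι → K, ∑ i, g i • v i = 0 →
      Function.support g ⊆ Function.support d → (∃ j, 0 < g j) → False := by
    intro g hg hgd hpos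
    obtain ⟨d', hd', hd'd, hlt⟩ := exists_nonneg_sum_smul_eq_support_ssubset hd hg hgd hpos
    exact hmin d' ⟨hd', hd'd.trans hdc⟩ (Set.ncard_lt_ncard hlt)
  by_contra hdep
  obtain ⟨f, hfd, hf, hf0⟩ := linearDepOn_iff'.mp hdep
  have hg : ∑ i, f i • v i = 0 := by
    rwa [Finsupp.linearCombination_apply, Finsupp.sum_fintype _ _ fun i => zero_smul K (v i)]
      at hf
  have hgd : Function.support f ⊆ Function.support d := by
    rwa [Finsupp.fun_support_eq, ← Finsupp.mem_supported K]
  obtain ⟨j, hj⟩ := Finsupp.ne_iff.mp hf0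
  rcases lt_or_gt_of_ne hj with hneg | hpos
  · refine no_pos_dependence (-f) ?_ (by rwa [Function.support_neg]) ⟨j, by simpa using hneg⟩
    simp [neg_smul, hg]
  · exact no_pos_dependence f hg hgd ⟨j, hpos⟩

end Caratheodory

lemma exists_maximalIndepCols_superset {n r : ℕ} {A : Matrix (Fin n) (Fin r) ℝ}
    {s : Set (Fin r)} (hs : LinearIndepOn ℝ Aᵀ s) :
    ∃ U : Finset (Fin r), s ⊆ U ∧ MaximalIndepCols A U := by
  obtain ⟨U, -, hU⟩ := Set.Finite.exists_le_maximal
    (s := {V : Finset (Fin r) | s ⊆ V ∧ LinearIndepOn ℝ Aᵀ (V : Set (Fin r))})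
    (Set.toFinite _) (a := s.toFinite.toFinset) ⟨by simp, by simpa using hs⟩
  refine ⟨U, hU.prop.1, hU.prop.2, fun V hUV hV => le_antisymm ?_ hUV⟩
  exact hU.2 ⟨hU.prop.1.trans (Finset.coe_subset.mpr hUV), hV⟩ hUV

lemma exists_forall_finsetLexLE {r : ℕ} {P : Finset (Fin r) → Prop} (h : ∃ U, P U) :
    ∃ U, P U ∧ ∀ V, P V → FinsetLexLE U V := by
  obtain ⟨U, hU, hmin⟩ :=
    Set.exists_min_image {U | P U} (fun U => U.sort (· ≤ ·)) (Set.toFinite _) h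
  refine ⟨U, hU, fun V hV => ?_⟩
  rcases (hmin V hV).lt_or_eq with hlt | heq
  · exact Or.inr hlt
  · exact Or.inl (by simpa using congrArg List.toFinset heq)

lemma exists_isLexLeastBasis {n r : ℕ} (A : Matrix (Fin n) (Fin r) ℝ) (c : Fin r → ℝ)
    (hc : ∀ i, 0 ≤ c i) : ∃ U, IsLexLeastBasis A U (A *ᵥ c) := by
  have mulVec_eq (x : Fin r → ℝ) : A *ᵥ x = ∑ i, x i • Aᵀ i := by
    simp [mulVec_eq_sum, op_smul_eq_smul]
  obtain ⟨d, hd, hdc, hind⟩ := exists_nonneg_sum_smul_eq_linearIndepOn_support (v := Aᵀ) c hc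
  obtain ⟨U₀, hdU₀, hU₀⟩ := exists_maximalIndepCols_superset hind
  have hcone : A *ᵥ c ∈ Cone A U₀ :=
    ⟨d, hd, fun i hi => not_not.mp fun h => hi (hdU₀ h), by rw [mulVec_eq, mulVec_eq, hdc]⟩
  obtain ⟨U, ⟨hU, hcU⟩, hle⟩ := exists_forall_finsetLexLE
    (P := fun U => MaximalIndepCols A U ∧ A *ᵥ c ∈ Cone A U) ⟨U₀, hU₀, hcone⟩
  exact ⟨U, hU, hcU, fun V hV hcV => hle V ⟨hV, hcV⟩⟩

lemma exists_nonneg_mul_eq_supported_on_isLexLeastBasis {n m r : ℕ}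
    (A : Matrix (Fin n) (Fin r) ℝ) (W : Matrix (Fin r) (Fin m) ℝ) (hW : ∀ i j, 0 ≤ W i j) :
    ∃ W' : Matrix (Fin r) (Fin m) ℝ, (∀ i j, 0 ≤ W' i j) ∧ A * W = A * W' ∧
      ∀ i, ∃ U, IsLexLeastBasis A U (fun l => (A * W) l i) ∧ ∀ t, W' t i ≠ 0 → t ∈ U := by
  choose U hU using fun i => exists_isLexLeastBasis A (fun t => W t i) (fun t => hW t i)
  choose c hc hcU hcW using fun i => (hU i).2.1
  refine ⟨of fun t i => c i t, fun t i => hc i t, ?_,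
    fun i => ⟨U i, hU i, fun t ht => not_not.mp fun h => ht (hcU i t h)⟩⟩
  ext l i
  exact congrFun (hcW i) l

/-- Existence of a proper chain: given a nonnegative factorization
`M = A * W`, there are nonnegative `A'`, `W'` with `M = A * W'` and `M = A' * W'`, where
each column of `W'` is supported on the lexicographically least minimal basis (in `C(A)`)
for the corresponding column of `M`, and each row of `A'` is supported on the
lexicographically least minimal basis (in `C(W'ᵀ)`) for the corresponding row of `M`. -/
theorem stmt3 {n m r : ℕ} (M : Matrix (Fin n) (Fin m) ℝ)
    (A : Matrix (Fin n) (Fin r) ℝ) (W : Matrix (Fin r) (Fin m) ℝ)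
    (hA : ∀ i j, 0 ≤ A i j) (hW : ∀ i j, 0 ≤ W i j) (hM : M = A * W) :
    ∃ (A' : Matrix (Fin n) (Fin r) ℝ) (W' : Matrix (Fin r) (Fin m) ℝ),
      (∀ i j, 0 ≤ A' i j) ∧ (∀ i j, 0 ≤ W' i j) ∧
      M = A * W' ∧ M = A' * W' ∧
      (∀ i : Fin m, ∃ U : Finset (Fin r),
        IsLexLeastBasis A U (fun l => M l i) ∧
        ∀ t : Fin r, W' t i ≠ 0 → t ∈ U) ∧
      (∀ j : Fin n, ∃ V : Finset (Fin r),
        IsLexLeastBasis W'ᵀ V (fun l => M j l) ∧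
        ∀ t : Fin r, A' j t ≠ 0 → t ∈ V) := by
  subst hM
  obtain ⟨W', hW', hAW', hcols⟩ := exists_nonneg_mul_eq_supported_on_isLexLeastBasis A W hW
  obtain ⟨A'', hA'', hW'A, hrows⟩ :=
    exists_nonneg_mul_eq_supported_on_isLexLeastBasis W'ᵀ Aᵀ fun i j => hA j i
  rw [← transpose_mul, ← hAW'] at hW'A hrows
  refine ⟨A''ᵀ, W', fun i j => hA'' j i, hW', hAW', ?_, hcols, hrows⟩
  rw [← transpose_transpose (A * W), hW'A, transpose_mul, transpose_transpose]
end

section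
/- If a nonnegative n×m real matrix M has a factorization M = A·W where A is a nonnegative n×r matrix, W is a nonnegative r×m matrix, and A is separable, then there exist an integer r' ≤ r, a nonnegative n×r' matrix A' and a nonnegative r'×m matrix W' such that M = A'·W', A' is separable, and W' is simplicial. -/
/-!
If some row `W t` is a convex combination `∑ cᵢ W_{s(i)}` of the other rows (`s = t.succAbove`),
then `A * W = A' * W'`, where `W'` drops row `t` and `A'` drops column `t` after adding
`cᵢ` times it to column `s(i)`. This keeps all entries nonnegative, and keeps `A` separable
because the row of `A` isolating column `s(i)` vanishes in column `t`. Repeating this lowers the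
inner dimension until no row of `W` is in the convex hull of the others.
-/

open Matrix

def Separable {n r : ℕ} (A : Matrix (Fin n) (Fin r) ℝ) : Prop :=
  ∀ i : Fin r, ∃ j : Fin n, A j i ≠ 0 ∧ ∀ i' : Fin r, i' ≠ i → A j i' = 0

def Simplicial {r m : ℕ} (W : Matrix (Fin r) (Fin m) ℝ) : Prop :=
  ∀ t : Fin r, W t ∉ convexHull ℝ (W '' {t' | t' ≠ t})

open Set

theorem exists_nonneg_sum_smul_eq_of_mem_convexHull_range {R ι E : Type*} [Field R]
    [LinearOrder R] [IsStrictOrderedRing R] [Fintype ι] [AddCommGroup E] [Module R E]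
    {v : ι → E} {x : E} (hx : x ∈ convexHull R (range v)) :
    ∃ c : ι → R, (∀ i, 0 ≤ c i) ∧ ∑ i, c i • v i = x := by
  classical
  have hv : range v = Fintype.linearCombination R v '' range fun i ↦ Pi.single i 1 := by
    rw [← range_comp]
    congr! 1
    ext i
    simp [Fintype.linearCombination_apply_single]
  rw [hv, ← LinearMap.image_convexHull, convexHull_rangle_single_eq_stdSimplex] at hx
  obtain ⟨c, hc, rfl⟩ := hx
  exact ⟨c, hc.1, (Fintype.linearCombination_apply R v c).symm⟩

theorem not_simplicial_iff {r m : ℕ} (W : Matrix (Fin (r + 1)) (Fin m) ℝ) :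
    ¬ Simplicial W ↔ ∃ t : Fin (r + 1), W t ∈ convexHull ℝ (range fun i ↦ W (t.succAbove i)) := by
  simp only [Simplicial, not_forall, not_not]
  exact exists_congr fun t ↦ by rw [range_comp' W t.succAbove, Fin.range_succAbove]; rfl

theorem Simplicial.of_fin_zero {m : ℕ} (W : Matrix (Fin 0) (Fin m) ℝ) : Simplicial W :=
  fun t ↦ t.elim0

namespace Matrix

variable {ι κ R : Type*} {k : ℕ}

def absorbColumn [Mul R] [Add R] (A : Matrix ι (Fin (k + 1)) R) (t : Fin (k + 1))
    (c : Fin k → R) : Matrix ι (Fin k) R :=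
  of fun j i ↦ A j (t.succAbove i) + A j t * c i

theorem mul_eq_absorbColumn_mul_submatrix [Semiring R] (A : Matrix ι (Fin (k + 1)) R)
    (W : Matrix (Fin (k + 1)) κ R) (t : Fin (k + 1)) (c : Fin k → R)
    (hWt : W t = ∑ i, c i • W (t.succAbove i)) :
    A * W = A.absorbColumn t c * W.submatrix t.succAbove id := by
  ext j l
  have hWtl : W t l = ∑ i, c i * W (t.succAbove i) l := by
    simp [hWt, Finset.sum_apply]
  simp only [mul_apply, Fin.sum_univ_succAbove _ t, hWtl, Finset.mul_sum, absorbColumn, of_apply,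
    submatrix_apply, id, add_mul, mul_assoc, Finset.sum_add_distrib, add_comm]

theorem absorbColumn_nonneg [Semiring R] [PartialOrder R] [IsOrderedRing R]
    {A : Matrix ι (Fin (k + 1)) R} (hA : ∀ i j, 0 ≤ A i j) (t : Fin (k + 1)) {c : Fin k → R}
    (hc : ∀ i, 0 ≤ c i) (j : ι) (i : Fin k) : 0 ≤ A.absorbColumn t c j i :=
  add_nonneg (hA _ _) (mul_nonneg (hA _ _) (hc _))

end Matrix

theorem Separable.absorbColumn {n k : ℕ} {A : Matrix (Fin n) (Fin (k + 1)) ℝ}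
    (hA : Separable A) (t : Fin (k + 1)) (c : Fin k → ℝ) : Separable (A.absorbColumn t c) := by
  intro i
  obtain ⟨j, hji, hj⟩ := hA (t.succAbove i)
  have hjt : A j t = 0 := hj t (Fin.succAbove_ne t i).symm
  refine ⟨j, by simpa [Matrix.absorbColumn, hjt] using hji, fun i' hi' ↦ ?_⟩
  simp [Matrix.absorbColumn, hjt, hj _ (t.succAbove_right_injective.ne hi')]

theorem exists_separable_factorization_of_not_simplicial {n m k : ℕ}
    {A : Matrix (Fin n) (Fin (k + 1)) ℝ} {W : Matrix (Fin (k + 1)) (Fin m) ℝ}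
    (hA : ∀ i j, 0 ≤ A i j) (hW : ∀ i j, 0 ≤ W i j) (hsep : Separable A)
    (hsimp : ¬ Simplicial W) :
    ∃ (A' : Matrix (Fin n) (Fin k) ℝ) (W' : Matrix (Fin k) (Fin m) ℝ),
      (∀ i j, 0 ≤ A' i j) ∧ (∀ i j, 0 ≤ W' i j) ∧ A * W = A' * W' ∧ Separable A' := by
  obtain ⟨t, ht⟩ := (not_simplicial_iff W).1 hsimp
  obtain ⟨c, hc, hWt⟩ := exists_nonneg_sum_smul_eq_of_mem_convexHull_range ht
  exact ⟨A.absorbColumn t c, W.submatrix t.succAbove id, absorbColumn_nonneg hA t hc,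
    fun _ _ ↦ hW _ _, mul_eq_absorbColumn_mul_submatrix A W t c hWt.symm, hsep.absorbColumn t c⟩

theorem stmt8_general {n m r : ℕ} (M : Matrix (Fin n) (Fin m) ℝ)
    (A : Matrix (Fin n) (Fin r) ℝ) (W : Matrix (Fin r) (Fin m) ℝ)
    (hA : ∀ i j, 0 ≤ A i j) (hW : ∀ i j, 0 ≤ W i j)
    (hfac : M = A * W) (hsep : Separable A) :
    ∃ (r' : ℕ) (A' : Matrix (Fin n) (Fin r') ℝ) (W' : Matrix (Fin r') (Fin m) ℝ),
      r' ≤ r ∧ (∀ i j, 0 ≤ A' i j) ∧ (∀ i j, 0 ≤ W' i j) ∧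
      M = A' * W' ∧ Separable A' ∧ Simplicial W' := by
  subst hfac
  induction r with
  | zero => exact ⟨0, A, W, le_rfl, hA, hW, rfl, hsep, .of_fin_zero W⟩
  | succ k ih =>
    by_cases hsimp : Simplicial W
    · exact ⟨k + 1, A, W, le_rfl, hA, hW, rfl, hsep, hsimp⟩
    obtain ⟨A', W', hA', hW', hfac, hsep'⟩ :=
      exists_separable_factorization_of_not_simplicial hA hW hsep hsimp
    obtain ⟨r', A'', W'', hr', h⟩ := ih A' W' hA' hW' hsep'
    exact ⟨r', A'', W'', hr'.trans k.le_succ, hfac ▸ h⟩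

/-- If a nonnegative matrix `M` has a separable nonnegative
factorization of inner dimension `r`, then it has one of inner dimension `r' ≤ r` in
which the first factor is separable and the second factor is simplicial. -/
theorem stmt8 {n m r : ℕ} (M : Matrix (Fin n) (Fin m) ℝ) (hM : ∀ i j, 0 ≤ M i j)
    (A : Matrix (Fin n) (Fin r) ℝ) (W : Matrix (Fin r) (Fin m) ℝ)
    (hA : ∀ i j, 0 ≤ A i j) (hW : ∀ i j, 0 ≤ W i j)
    (hfac : M = A * W) (hsep : Separable A) :
    ∃ (r' : ℕ) (A' : Matrix (Fin n) (Fin r') ℝ) (W' : Matrix (Fin r') (Fin m) ℝ),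
      r' ≤ r ∧ (∀ i j, 0 ≤ A' i j) ∧ (∀ i j, 0 ≤ W' i j) ∧
      M = A' * W' ∧ Separable A' ∧ Simplicial W' :=
  stmt8_general M A W hA hW hfac hsep
end

section
/- Let M = A·W where A is a nonnegative n×r real matrix, W is a nonnegative r×m real matrix, every row of M, every row of A, and every row of W has ℓ1 norm equal to 1, A is separable, and W is simplicial. Call a row M^j a loner if M^j does not lie in the convex hull of the set of rows { M^{j'} : j' ∈ {1,…,n}, M^{j'} ≠ M^j }. Then a row M^j is a loner if and only if M^j = W^i for some i ∈ {1,…,r}. -/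
/-! Every row of `A * W` is a convex combination of rows of `W`, and separability of `A` makes
every row of `W` a row of `A * W`. By simpliciality the rows of `W` are extreme points of
`P = conv(rows of W)`. So a row of `M` that is not a row of `W` is a convex combination of other
rows of `M`, while a row of `W`, being extreme in `P`, is extreme in the convex hull of any subset
of `P` containing it, hence not a convex combination of points of `P` other than itself. -/

open Matrix

open Set

variable {𝕜 E : Type*} [Field 𝕜] [LinearOrder 𝕜] [IsStrictOrderedRing 𝕜] [AddCommGroup E]
  [Module 𝕜 E]

theorem eq_of_mem_openSegment_of_mem_segment {x y z u v : E} (hx : x ∈ openSegment 𝕜 y z)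
    (hy : y ∈ segment 𝕜 x u) (hz : z ∈ segment 𝕜 x v) (hxuv : x ∉ segment 𝕜 u v) : y = x := by
  obtain ⟨a, b, ha, hb, hab, hxyz⟩ := hx
  obtain ⟨p, q, hp, hq, hpq, rfl⟩ := hy
  obtain ⟨p', q', -, hq', hpq', rfl⟩ := hz
  obtain rfl | hq0 := hq.eq_or_lt
  · rw [zero_smul, add_zero, show p = 1 by linarith, one_smul]
  -- otherwise solving for `x` writes it as a convex combination of `u` and `v`
  refine absurd ?_ hxuv
  set c := a * q + b * q'
  have hc : 0 < c := add_pos_of_pos_of_nonneg (mul_pos ha hq0) (mul_nonneg hb.le hq')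
  have hcx : c • x = (a * q) • u + (b * q') • v := by
    obtain rfl : p = 1 - q := by linarith
    obtain rfl : p' = 1 - q' := by linarith
    linear_combination (norm := module) -hxyz + hab • x
  refine ⟨a * q / c, b * q' / c, by positivity, by positivity,
    by rw [← add_div, div_self hc.ne'], ?_⟩
  calc (a * q / c) • u + (b * q' / c) • v = c⁻¹ • (c • x) := by rw [hcx]; module
    _ = x := inv_smul_smul₀ hc.ne' x

theorem ConvexIndependent.subset_extremePoints_convexHull {s : Set E}
    (hs : ConvexIndependent 𝕜 ((↑) : s → E)) : s ⊆ (convexHull 𝕜 s).extremePoints 𝕜 := by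
  intro x hxs
  have hx := convexIndependent_set_iff_notMem_convexHull_sdiff.1 hs x hxs
  rcases (s \ {x}).eq_empty_or_nonempty with hempty | hne
  · rw [(sdiff_eq_empty.1 hempty).antisymm (singleton_subset_iff.2 hxs), convexHull_singleton,
      extremePoints_singleton]
    exact mem_singleton x
  rw [← insert_eq_of_mem hxs, ← insert_sdiff_singleton, convexHull_insert hne,
    convexJoin_singleton_left]
  obtain ⟨u₀, hu₀⟩ := hne.convexHull (𝕜 := 𝕜)
  refine ⟨mem_biUnion hu₀ (left_mem_segment 𝕜 x u₀), fun y hy z hz hxyz => ?_⟩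
  obtain ⟨u, hu, hyu⟩ := mem_iUnion₂.1 hy
  obtain ⟨v, hv, hzv⟩ := mem_iUnion₂.1 hz
  exact eq_of_mem_openSegment_of_mem_segment hxyz hyu hzv
    fun hxuv => hx ((convex_convexHull 𝕜 _).segment_subset hu hv hxuv)

variable (𝕜) in
def IsLoner {ι : Type*} (f : ι → E) (j : ι) : Prop :=
  f j ∉ convexHull 𝕜 (f '' {j' | f j' ≠ f j})

theorem isLoner_iff_mem {ι : Type*} {f : ι → E} {V : Set E}
    (hV : ConvexIndependent 𝕜 ((↑) : V → E)) (hVf : V ⊆ range f)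
    (hfV : range f ⊆ convexHull 𝕜 V) (j : ι) : IsLoner 𝕜 f j ↔ f j ∈ V := by
  constructor
  · intro hj
    by_contra hjV
    refine hj (convexHull_mono ?_ (hfV (mem_range_self j)))
    intro v hv
    obtain ⟨j', rfl⟩ := hVf hv
    exact ⟨j', fun h => hjV (h ▸ hv), rfl⟩
  · intro hjV hj
    have hsub : f '' {j' | f j' ≠ f j} ⊆ convexHull 𝕜 V :=
      (image_subset_range _ _).trans hfV
    obtain ⟨j', hj', hj'j⟩ := extremePoints_convexHull_subset
      (inter_extremePoints_subset_extremePoints_of_subset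
        (convexHull_min hsub (convex_convexHull 𝕜 V))
        ⟨hj, hV.subset_extremePoints_convexHull hjV⟩)
    exact hj' hj'j

namespace Matrix

variable {R ι κ μ : Type*} [Fintype κ]

theorem mul_apply_mem_convexHull_range {A : Matrix ι κ 𝕜} (W : Matrix κ μ 𝕜) {i : ι}
    (hA : ∀ k, 0 ≤ A i k) (hA1 : ∑ k, A i k = 1) : (A * W) i ∈ convexHull 𝕜 (range W) := by
  rw [mul_apply_eq_vecMul, vecMul_eq_sum]
  exact (convex_convexHull 𝕜 _).sum_mem (fun k _ => hA k) hA1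
    fun k _ => subset_convexHull 𝕜 _ (mem_range_self k)

theorem mul_apply_eq_of_forall_ne_eq_zero [Semiring R] [DecidableEq κ] {A : Matrix ι κ R}
    (W : Matrix κ μ R) {i : ι} {k₀ : κ} (hA1 : ∑ k, A i k = 1) (hA0 : ∀ k, k ≠ k₀ → A i k = 0) :
    (A * W) i = W k₀ := by
  have hrow : A i = Pi.single k₀ 1 := by
    funext k
    rcases eq_or_ne k k₀ with rfl | hk
    · rwa [Pi.single_eq_same, ← Finset.sum_eq_single k (fun t _ ht => hA0 t ht)
        (absurd (Finset.mem_univ k))]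
    · rw [hA0 k hk, Pi.single_eq_of_ne hk]
  rw [mul_apply_eq_vecMul, hrow, single_vecMul, one_smul, row]

end Matrix

theorem Separable.range_subset_range_mul {n r m : ℕ} {A : Matrix (Fin n) (Fin r) ℝ}
    (hsep : Separable A) (hA1 : ∀ j, ∑ t, A j t = 1) (W : Matrix (Fin r) (Fin m) ℝ) :
    range W ⊆ range (A * W) := by
  rintro _ ⟨i, rfl⟩
  obtain ⟨j, -, hj⟩ := hsep i
  exact ⟨j, mul_apply_eq_of_forall_ne_eq_zero W (hA1 j) hj⟩

theorem Simplicial.convexIndependent {r m : ℕ} {W : Matrix (Fin r) (Fin m) ℝ}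
    (hsimp : Simplicial W) : ConvexIndependent ℝ W :=
  convexIndependent_iff_notMem_convexHull_sdiff.2 fun i _ h =>
    hsimp i (convexHull_mono (image_mono fun _ ht => ht.2) h)

theorem stmt10_general {n m r : ℕ} (M : Matrix (Fin n) (Fin m) ℝ)
    (A : Matrix (Fin n) (Fin r) ℝ) (W : Matrix (Fin r) (Fin m) ℝ)
    (hA : ∀ i j, 0 ≤ A i j) (hfac : M = A * W)
    (hArow : ∀ j : Fin n, ∑ t, |A j t| = 1)
    (hsep : Separable A) (hsimp : Simplicial W) :
    ∀ j : Fin n,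
      (M j ∉ convexHull ℝ (M '' {j' | M j' ≠ M j})) ↔ ∃ i : Fin r, M j = W i := by
  subst hfac
  have hA1 : ∀ j, ∑ t, A j t = 1 := fun j => by simpa only [abs_of_nonneg (hA j _)] using hArow j
  have hrows : range (A * W) ⊆ convexHull ℝ (range W) :=
    range_subset_iff.2 fun j => mul_apply_mem_convexHull_range W (hA j) (hA1 j)
  intro j
  exact (isLoner_iff_mem hsimp.convexIndependent.range (hsep.range_subset_range_mul hA1 W)
    hrows j).trans (exists_congr fun _ => eq_comm)

/-- Under separability of `A` and the simplicial condition on `W`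
(all rows normalized in `ℓ1` norm), a row `M^j` of `M = A * W` is a loner — i.e. it is
not in the convex hull of the rows of `M` different from it (as vectors) — if and only
if `M^j` equals some row `W^i` of `W`. -/
theorem stmt10 {n m r : ℕ} (M : Matrix (Fin n) (Fin m) ℝ)
    (A : Matrix (Fin n) (Fin r) ℝ) (W : Matrix (Fin r) (Fin m) ℝ)
    (hA : ∀ i j, 0 ≤ A i j) (hW : ∀ i j, 0 ≤ W i j) (hfac : M = A * W)
    (hMrow : ∀ j : Fin n, ∑ l, |M j l| = 1)
    (hArow : ∀ j : Fin n, ∑ t, |A j t| = 1)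
    (hWrow : ∀ t : Fin r, ∑ l, |W t l| = 1)
    (hsep : Separable A) (hsimp : Simplicial W) :
    ∀ j : Fin n,
      (M j ∉ convexHull ℝ (M '' {j' | M j' ≠ M j})) ↔ ∃ i : Fin r, M j = W i :=
  stmt10_general M A W hA hfac hArow hsep hsimp
end

section
/- Let M = A·W where A is a nonnegative n×r real matrix whose rows each have ℓ1 norm 1 and W is a nonnegative r×m real matrix, and suppose A is separable with witness f : {1,…,r} → {1,…,n}, meaning that for each i the row A^{f(i)} has its only nonzero entry in column i. Then M^{f(i)} = W^i for every i ∈ {1,…,r}, and every row of M lies in the convex hull of the rows M^{f(1)}, …, M^{f(r)}; indeed, M^j = Σ_{k=1}^r A_{j,k} · M^{f(k)} with A_{j,k} ≥ 0 and Σ_{k=1}^r A_{j,k} = 1. -/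
open Matrix Finset

lemma eq_single_one_of_sum_eq_one {ι R : Type*} [Fintype ι] [DecidableEq ι] [AddCommMonoidWithOne R]
    {v : ι → R} {i : ι} (hsum : ∑ t, v t = 1) (hzero : ∀ t, t ≠ i → v t = 0) :
    v = Pi.single i 1 := by
  have hi : v i = 1 := by
    rwa [sum_eq_single i (fun t _ ht => hzero t ht) (by simp)] at hsum
  funext t
  rcases eq_or_ne t i with rfl | ht
  · simp [hi]
  · simp [hzero t ht, ht]

lemma sum_smul_mem_convexHull_range {ι R E : Type*} [Fintype ι] [Field R] [LinearOrder R]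
    [IsStrictOrderedRing R] [AddCommGroup E] [Module R E] {w : ι → R}
    (hw₀ : ∀ t, 0 ≤ w t) (hw₁ : ∑ t, w t = 1) (v : ι → E) :
    ∑ t, w t • v t ∈ convexHull R (Set.range v) :=
  (convex_convexHull R _).sum_mem (fun t _ => hw₀ t) hw₁
    (fun t _ => subset_convexHull R _ (Set.mem_range_self t))

theorem stmt11_general {n m r : ℕ} (M : Matrix (Fin n) (Fin m) ℝ)
    (A : Matrix (Fin n) (Fin r) ℝ) (W : Matrix (Fin r) (Fin m) ℝ)
    (hA : ∀ i j, 0 ≤ A i j) (hArow : ∀ j : Fin n, ∑ t, |A j t| = 1)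
    (hfac : M = A * W)
    (f : Fin r → Fin n)
    (hwit : ∀ i : Fin r, A (f i) i ≠ 0 ∧ ∀ i' : Fin r, i' ≠ i → A (f i) i' = 0) :
    (∀ i : Fin r, M (f i) = W i) ∧
    (∀ j : Fin n,
      M j = ∑ t, A j t • M (f t) ∧ (∀ t, 0 ≤ A j t) ∧ (∑ t, A j t = 1) ∧
      M j ∈ convexHull ℝ (Set.range fun i : Fin r => M (f i))) := by
  have hsum (j : Fin n) : ∑ t, A j t = 1 := by
    simpa only [abs_of_nonneg (hA j _)] using hArow j
  have hcanon (i : Fin r) : M (f i) = W i := by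
    rw [hfac, mul_apply_eq_vecMul, eq_single_one_of_sum_eq_one (hsum (f i)) (hwit i).2,
      single_one_vecMul, row]
  have hrow (j : Fin n) : M j = ∑ t, A j t • M (f t) := by
    simp only [hcanon]
    rw [hfac, mul_apply_eq_vecMul, vecMul_eq_sum]
  refine ⟨hcanon, fun j => ⟨hrow j, hA j, hsum j, ?_⟩⟩
  rw [hrow j]
  exact sum_smul_mem_convexHull_range (hA j) (hsum j) _

/-- If `M = A * W`, `A` nonnegative with unit `ℓ1`-norm rows and
separable with witness `f`, and `W` nonnegative, then the canonical rows of `M` are the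
rows of `W`, and every row of `M` is the explicit convex combination
`M^j = Σ_k A_{j,k} • M^{f(k)}` of the canonical rows; in particular each row of `M` lies
in the convex hull of the canonical rows. -/
theorem stmt11 {n m r : ℕ} (M : Matrix (Fin n) (Fin m) ℝ)
    (A : Matrix (Fin n) (Fin r) ℝ) (W : Matrix (Fin r) (Fin m) ℝ)
    (hA : ∀ i j, 0 ≤ A i j) (hArow : ∀ j : Fin n, ∑ t, |A j t| = 1)
    (hW : ∀ i j, 0 ≤ W i j) (hfac : M = A * W)
    (f : Fin r → Fin n)
    (hwit : ∀ i : Fin r, A (f i) i ≠ 0 ∧ ∀ i' : Fin r, i' ≠ i → A (f i) i' = 0) :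
    (∀ i : Fin r, M (f i) = W i) ∧
    (∀ j : Fin n,
      M j = ∑ t, A j t • M (f t) ∧ (∀ t, 0 ≤ A j t) ∧ (∑ t, A j t = 1) ∧
      M j ∈ convexHull ℝ (Set.range fun i : Fin r => M (f i))) :=
  stmt11_general M A W hA hArow hfac f hwit
end

section
/- Let M = A·W where A is a nonnegative n×r real matrix whose rows each have ℓ1 norm 1 and W is a nonnegative r×m real matrix, and suppose A is separable with witness f : {1,…,r} → {1,…,n}, meaning that for each i the row A^{f(i)} has its only nonzero entry in column i. Let ε ≥ 0 and let M' be an n×m real matrix with ‖M'^j − M^j‖₁ ≤ ε for every j ∈ {1,…,n}. Then for every j ∈ {1,…,n}: ‖M'^j − Σ_{k=1}^r A_{j,k} · M'^{f(k)}‖₁ ≤ 2ε; in particular, every row of M' has ℓ1 distance at most 2ε to the convex hull of the canonical rows M'^{f(1)}, …, M'^{f(r)}. -/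
/-!
Separability and unit row sums force each canonical row `A^{f(k)}` to be the unit vector `e_k`,
so `M^{f(k)} = W^k` and every row `M^j = Σ_k A_{j,k} M^{f(k)}` is a convex combination of the
canonical rows of `M`. Replacing `M` by `M'` in this identity moves the left side by at most `ε`
and the right side by at most `Σ_k A_{j,k} ε = ε`.
-/

open Matrix

def l1norm {m : ℕ} (x : Fin m → ℝ) : ℝ := ∑ l, |x l|

theorem l1norm_eq_norm_toLp {m : ℕ} (x : Fin m → ℝ) : l1norm x = ‖WithLp.toLp 1 x‖ := by
  simp [l1norm, PiLp.norm_eq_of_L1]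

theorem norm_sub_sum_smul_le {E ι : Type*} [SeminormedAddCommGroup E] [NormedSpace ℝ E]
    (s : Finset ι) {w : ι → ℝ} (hw : ∀ i ∈ s, 0 ≤ w i) (z z' : ι → E) (y' : E) :
    ‖y' - ∑ i ∈ s, w i • z' i‖ ≤ ‖y' - ∑ i ∈ s, w i • z i‖ + ∑ i ∈ s, w i * ‖z' i - z i‖ := by
  have hsplit : y' - ∑ i ∈ s, w i • z' i
      = (y' - ∑ i ∈ s, w i • z i) - ∑ i ∈ s, w i • (z' i - z i) := by
    simp only [smul_sub, Finset.sum_sub_distrib]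
    abel
  calc ‖y' - ∑ i ∈ s, w i • z' i‖
      ≤ ‖y' - ∑ i ∈ s, w i • z i‖ + ‖∑ i ∈ s, w i • (z' i - z i)‖ := hsplit ▸ norm_sub_le _ _
    _ ≤ ‖y' - ∑ i ∈ s, w i • z i‖ + ∑ i ∈ s, w i * ‖z' i - z i‖ := by
      gcongr
      refine (norm_sum_le _ _).trans (Finset.sum_le_sum fun i hi => ?_)
      rw [norm_smul, Real.norm_of_nonneg (hw i hi)]

theorem l1norm_sub_sum_smul_le {m : ℕ} {ι : Type*} (s : Finset ι) {w : ι → ℝ}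
    (hw : ∀ i ∈ s, 0 ≤ w i) (z z' : ι → Fin m → ℝ) (y' : Fin m → ℝ) :
    l1norm (y' - ∑ i ∈ s, w i • z' i)
      ≤ l1norm (y' - ∑ i ∈ s, w i • z i) + ∑ i ∈ s, w i * l1norm (z' i - z i) := by
  simp only [l1norm_eq_norm_toLp, WithLp.toLp_sub, WithLp.toLp_sum, WithLp.toLp_smul]
  exact norm_sub_sum_smul_le s hw _ _ _

theorem eq_single_of_sum_abs_eq_one {ι : Type*} [Fintype ι] [DecidableEq ι] {a : ι → ℝ} {i : ι}
    (hi : 0 ≤ a i) (hsum : ∑ t, |a t| = 1) (hzero : ∀ t, t ≠ i → a t = 0) :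
    a = Pi.single i 1 := by
  rw [Finset.sum_eq_single i (fun t _ ht => by rw [hzero t ht, abs_zero])
    (fun h => absurd (Finset.mem_univ i) h), abs_of_nonneg hi] at hsum
  ext t
  rcases eq_or_ne t i with rfl | ht
  · simpa using hsum
  · simp [hzero t ht, ht]

theorem mul_row_eq_sum_smul_mul_row {κ ι μ R : Type*} [Semiring R] [Fintype ι] [DecidableEq ι]
    (A : Matrix κ ι R) (W : Matrix ι μ R) {f : ι → κ} (hf : ∀ i, A (f i) = Pi.single i 1)
    (j : κ) : (A * W) j = ∑ i, A j i • (A * W) (f i) := by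
  rw [mul_apply_eq_vecMul, vecMul_eq_sum]
  simp only [mul_apply_eq_vecMul, hf, single_one_vecMul]
  rfl

theorem stmt12_general {n m r : ℕ} (M : Matrix (Fin n) (Fin m) ℝ)
    (A : Matrix (Fin n) (Fin r) ℝ) (W : Matrix (Fin r) (Fin m) ℝ)
    (hA : ∀ i j, 0 ≤ A i j) (hArow : ∀ j : Fin n, ∑ t, |A j t| = 1)
    (hfac : M = A * W)
    (f : Fin r → Fin n)
    (hwit : ∀ i : Fin r, A (f i) i ≠ 0 ∧ ∀ i' : Fin r, i' ≠ i → A (f i) i' = 0)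
    (ε : ℝ)
    (M' : Matrix (Fin n) (Fin m) ℝ)
    (hM' : ∀ j : Fin n, l1norm (M' j - M j) ≤ ε) :
    ∀ j : Fin n,
      l1norm (M' j - ∑ t, A j t • M' (f t)) ≤ 2 * ε ∧
      ∃ y ∈ convexHull ℝ (Set.range fun i : Fin r => M' (f i)),
        l1norm (M' j - y) ≤ 2 * ε := by
  intro j
  have hsum : ∑ t, A j t = 1 := by simpa only [abs_of_nonneg (hA j _)] using hArow j
  have hcanon : ∀ i, A (f i) = Pi.single i 1 := fun i =>
    eq_single_of_sum_abs_eq_one (hA _ _) (hArow (f i)) (hwit i).2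
  have hMj : M j = ∑ t, A j t • M (f t) := hfac ▸ mul_row_eq_sum_smul_mul_row A W hcanon j
  have key : l1norm (M' j - ∑ t, A j t • M' (f t)) ≤ 2 * ε := calc
    _ ≤ l1norm (M' j - ∑ t, A j t • M (f t)) + ∑ t, A j t * l1norm (M' (f t) - M (f t)) :=
      l1norm_sub_sum_smul_le _ (fun t _ => hA j t) _ _ _
    _ ≤ ε + ∑ t, A j t * ε := by
      rw [← hMj]
      gcongr with t
      exacts [hM' j, hA j t, hM' (f t)]
    _ = 2 * ε := by rw [← Finset.sum_mul, hsum]; ring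
  exact ⟨key, _, (convex_convexHull ℝ _).sum_mem (fun t _ => hA j t) hsum
    fun t _ => subset_convexHull ℝ _ (Set.mem_range_self t), key⟩

/-- If `M = A * W` with `A` nonnegative, unit `ℓ1`-norm rows and
separable with witness `f`, `W` nonnegative, and `M'` is an entrywise row-ℓ1
`ε`-perturbation of `M`, then every row of `M'` is within `ℓ1` distance `2ε` of the
explicit convex combination `Σ_k A_{j,k} • M'^{f(k)}` of the canonical rows of `M'`; in
particular every row of `M'` has `ℓ1` distance at most `2ε` to the convex hull of the
canonical rows. -/
theorem stmt12 {n m r : ℕ} (M : Matrix (Fin n) (Fin m) ℝ)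
    (A : Matrix (Fin n) (Fin r) ℝ) (W : Matrix (Fin r) (Fin m) ℝ)
    (hA : ∀ i j, 0 ≤ A i j) (hArow : ∀ j : Fin n, ∑ t, |A j t| = 1)
    (hW : ∀ i j, 0 ≤ W i j) (hfac : M = A * W)
    (f : Fin r → Fin n)
    (hwit : ∀ i : Fin r, A (f i) i ≠ 0 ∧ ∀ i' : Fin r, i' ≠ i → A (f i) i' = 0)
    (ε : ℝ) (hε : 0 ≤ ε)
    (M' : Matrix (Fin n) (Fin m) ℝ)
    (hM' : ∀ j : Fin n, l1norm (M' j - M j) ≤ ε) :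
    ∀ j : Fin n,
      l1norm (M' j - ∑ t, A j t • M' (f t)) ≤ 2 * ε ∧
      ∃ y ∈ convexHull ℝ (Set.range fun i : Fin r => M' (f i)),
        l1norm (M' j - y) ≤ 2 * ε :=
  stmt12_general M A W hA hArow hfac f hwit ε M' hM'
end

section
/- Let M = A·W where A is a nonnegative n×r real matrix whose rows each have ℓ1 norm 1, W is a nonnegative r×m real matrix whose rows each have ℓ1 norm 1, A is separable, and W is α-robust simplicial for some α > 0. Let ε ≥ 0 satisfy 20ε/α + 13ε < α, and let M' be an n×m real matrix with ‖M'^j − M^j‖₁ ≤ ε for every j ∈ {1,…,n}. Then there exists a set S ⊆ {1,…,n} with |S| = r such that every row of M' has ℓ1 distance at most 10ε/α + 7ε to the convex hull of { M'^i : i ∈ S }; equivalently, there exist a nonnegative n×r matrix A' whose rows each sum to 1 and an r×m matrix W' each of whose rows is a row of M', such that ‖M'^j − (A'·W')^j‖₁ ≤ 10ε/α + 7ε for every j. -/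
open Matrix

/-- `W` is `α`-robust simplicial: every row of `W` has `ℓ1` distance at least `α` to the
convex hull of the remaining rows. -/
def RobustSimplicial {r m : ℕ} (W : Matrix (Fin r) (Fin m) ℝ) (α : ℝ) : Prop :=
  ∀ t : Fin r, ∀ y ∈ convexHull ℝ (W '' {t' | t' ≠ t}), α ≤ l1norm (W t - y)

theorem norm_sub_sum_smul_le_two_mul {ι E : Type*} [Fintype ι] [SeminormedAddCommGroup E]
    [NormedSpace ℝ E] {w : ι → ℝ} (hw0 : ∀ t, 0 ≤ w t) (hw1 : ∑ t, w t = 1)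
    {x x' : E} {z z' : ι → E} {ε : ℝ} (hx : x = ∑ t, w t • z t) (hx' : ‖x' - x‖ ≤ ε)
    (hz : ∀ t, ‖z' t - z t‖ ≤ ε) :
    ‖x' - ∑ t, w t • z' t‖ ≤ 2 * ε := by
  have hsplit : x' - ∑ t, w t • z' t = (x' - x) - ∑ t, w t • (z' t - z t) := by
    simp only [hx, smul_sub, Finset.sum_sub_distrib]
    abel
  have hsum : ‖∑ t, w t • (z' t - z t)‖ ≤ ε :=
    calc ‖∑ t, w t • (z' t - z t)‖ ≤ ∑ t, w t * ε := by
          refine (norm_sum_le _ _).trans (Finset.sum_le_sum fun t _ => ?_)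
          rw [norm_smul, Real.norm_of_nonneg (hw0 t)]
          exact mul_le_mul_of_nonneg_left (hz t) (hw0 t)
      _ = ε := by rw [← Finset.sum_mul, hw1, one_mul]
  rw [hsplit]
  linarith [norm_sub_le (x' - x) (∑ t, w t • (z' t - z t))]

theorem l1norm_sub_sum_smul_le_two_mul {r m : ℕ} {w : Fin r → ℝ} (hw0 : ∀ t, 0 ≤ w t)
    (hw1 : ∑ t, w t = 1) {x x' : Fin m → ℝ} {z z' : Fin r → Fin m → ℝ} {ε : ℝ}
    (hx : x = ∑ t, w t • z t) (hx' : l1norm (x' - x) ≤ ε)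
    (hz : ∀ t, l1norm (z' t - z t) ≤ ε) :
    l1norm (x' - ∑ t, w t • z' t) ≤ 2 * ε := by
  simp only [l1norm_eq_norm_toLp, WithLp.toLp_sub, WithLp.toLp_sum, WithLp.toLp_smul]
    at hx' hz ⊢
  exact norm_sub_sum_smul_le_two_mul hw0 hw1 (by rw [hx, WithLp.toLp_sum]; simp) hx' hz

namespace Separable

variable {n r : ℕ} {A : Matrix (Fin n) (Fin r) ℝ}

theorem exists_rows_eq_single (hsep : Separable A) (hA : ∀ i j, 0 ≤ A i j)
    (hArow : ∀ j, ∑ t, |A j t| = 1) : ∃ f : Fin r → Fin n, ∀ i, A (f i) = Pi.single i 1 := by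
  choose f _ hzero using hsep
  refine ⟨f, fun i => ?_⟩
  have hrow : A (f i) = Pi.single i (A (f i) i) := by
    ext t
    rcases eq_or_ne t i with rfl | ht
    · simp
    · simp [hzero i t ht, ht]
  have hone : A (f i) i = 1 := by
    have h := hArow (f i)
    rwa [Fintype.sum_eq_single i fun t ht => by rw [hzero i t ht, abs_zero],
      abs_of_nonneg (hA _ _)] at h
  rwa [hone] at hrow

end Separable

theorem row_mul_eq_sum_smul_anchor_rows {n m r : ℕ} {A : Matrix (Fin n) (Fin r) ℝ}
    {W : Matrix (Fin r) (Fin m) ℝ} {f : Fin r → Fin n} (hf : ∀ i, A (f i) = Pi.single i 1)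
    (j : Fin n) : (A * W) j = ∑ t, A j t • (A * W) (f t) := by
  have hanchor : ∀ t, (A * W) (f t) = W t := fun t => by
    ext l
    simp [Matrix.mul_apply, hf, Pi.single_apply]
  simp only [hanchor]
  ext l
  simp [Matrix.mul_apply]

theorem stmt14_general {n m r : ℕ} (M : Matrix (Fin n) (Fin m) ℝ)
    (A : Matrix (Fin n) (Fin r) ℝ) (W : Matrix (Fin r) (Fin m) ℝ)
    (hA : ∀ i j, 0 ≤ A i j) (hArow : ∀ j : Fin n, ∑ t, |A j t| = 1)
    (hfac : M = A * W)
    (hsep : Separable A)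
    (α : ℝ) (hα : 0 < α)
    (ε : ℝ) (hε : 0 ≤ ε)
    (M' : Matrix (Fin n) (Fin m) ℝ)
    (hM' : ∀ j : Fin n, l1norm (M' j - M j) ≤ ε) :
    ∃ S : Finset (Fin n), S.card = r ∧
      ∀ j : Fin n, ∃ y ∈ convexHull ℝ (M' '' (S : Set (Fin n))),
        l1norm (M' j - y) ≤ 10 * ε / α + 7 * ε := by
  obtain ⟨f, hf⟩ := hsep.exists_rows_eq_single hA hArow
  have hinj : f.Injective := fun a b hab => by
    have h := congrFun (hf a) a
    rw [hab, hf b] at h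
    by_contra hne
    simp [Ne.symm hne] at h
  refine ⟨Finset.univ.image f, by simp [Finset.card_image_of_injective _ hinj], fun j => ?_⟩
  have hw1 : ∑ t, A j t = 1 := by simpa only [abs_of_nonneg (hA j _)] using hArow j
  refine ⟨∑ t, A j t • M' (f t), ?_, ?_⟩
  · rw [← Finset.centerMass_eq_of_sum_1 _ _ hw1]
    exact Finset.centerMass_mem_convexHull _ (fun t _ => hA j t) (by simp [hw1])
      fun t _ => ⟨f t, by simp, rfl⟩
  · have h2ε := l1norm_sub_sum_smul_le_two_mul (hA j) hw1
      (by rw [hfac]; exact row_mul_eq_sum_smul_anchor_rows hf j) (hM' j) (fun t => hM' (f t))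
    have : 0 ≤ 10 * ε / α := by positivity
    linarith

/-- Noise-tolerant factorization under separability: if `M = A * W`
with `A` separable, `W` `α`-robust simplicial (rows normalized in `ℓ1`), `ε ≥ 0`
satisfies `20ε/α + 13ε < α`, and `M'` is a row-ℓ1 `ε`-perturbation of `M`, then there is
a set `S` of `r` row indices of `M'` such that every row of `M'` lies within `ℓ1`
distance `10ε/α + 7ε` of the convex hull of the rows of `M'` indexed by `S`. -/
theorem stmt14 {n m r : ℕ} (M : Matrix (Fin n) (Fin m) ℝ)
    (A : Matrix (Fin n) (Fin r) ℝ) (W : Matrix (Fin r) (Fin m) ℝ)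
    (hA : ∀ i j, 0 ≤ A i j) (hArow : ∀ j : Fin n, ∑ t, |A j t| = 1)
    (hW : ∀ i j, 0 ≤ W i j) (hWrow : ∀ t : Fin r, ∑ l, |W t l| = 1)
    (hfac : M = A * W)
    (hsep : Separable A)
    (α : ℝ) (hα : 0 < α) (hrob : RobustSimplicial W α)
    (ε : ℝ) (hε : 0 ≤ ε) (hcond : 20 * ε / α + 13 * ε < α)
    (M' : Matrix (Fin n) (Fin m) ℝ)
    (hM' : ∀ j : Fin n, l1norm (M' j - M j) ≤ ε) :
    ∃ S : Finset (Fin n), S.card = r ∧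
      ∀ j : Fin n, ∃ y ∈ convexHull ℝ (M' '' (S : Set (Fin n))),
        l1norm (M' j - y) ≤ 10 * ε / α + 7 * ε :=
  stmt14_general M A W hA hArow hfac hsep α hα ε hε M' hM'
end

section
/- Let M be an n×m real matrix, A a nonnegative n×r real matrix, and W a nonnegative r×m real matrix such that no row of W is zero and ‖M − A·W‖_F ≤ ε·‖M‖_F for some ε ≥ 0. Then there exist a nonnegative n×r matrix A' and a nonnegative r×m matrix W' with A'·W' = A·W such that: every row of W' has Euclidean norm 1; every column of A' has Euclidean norm at most (1+ε)·‖M‖_F; and ‖A'‖_F ≤ (1+ε)·‖M‖_F. -/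
open Matrix

/-- The Frobenius norm of a matrix. -/
noncomputable def frobNorm {n m : ℕ} (M : Matrix (Fin n) (Fin m) ℝ) : ℝ :=
  Real.sqrt (∑ i, ∑ j, (M i j) ^ 2)

/-- The Euclidean norm of a vector. -/
noncomputable def eNorm {k : ℕ} (x : Fin k → ℝ) : ℝ :=
  Real.sqrt (∑ i, (x i) ^ 2)

/-! Rescaling row `t` of `W` by `1 / ‖W_t‖` and column `t` of `A` by `‖W_t‖` keeps `A W` and makes
the rows of `W` unit vectors. Because `A` and `W` are nonnegative, the new `A` is dominated by
`A W` in Frobenius norm: its `(i, t)` entry squared is `∑_j (A_it W_tj)²`, and summing over `t`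
gives at most `∑_j (∑_t A_it W_tj)² = ∑_j (A W)_ij²`. Finally `‖A W‖_F ≤ ‖M‖_F + ‖M - A W‖_F`. -/

lemma eNorm_eq_norm {k : ℕ} (x : Fin k → ℝ) : eNorm x = ‖WithLp.toLp 2 x‖ := by
  simp [eNorm, EuclideanSpace.norm_eq]

lemma eNorm_pos {k : ℕ} {x : Fin k → ℝ} (hx : x ≠ 0) : 0 < eNorm x := by
  rw [eNorm_eq_norm, norm_pos_iff]
  exact fun h => hx (congrArg WithLp.ofLp h)

lemma eNorm_smul {k : ℕ} (c : ℝ) (x : Fin k → ℝ) : eNorm (c • x) = |c| * eNorm x := by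
  rw [eNorm_eq_norm, eNorm_eq_norm, WithLp.toLp_smul, norm_smul, Real.norm_eq_abs]

lemma sq_eNorm {k : ℕ} (x : Fin k → ℝ) : eNorm x ^ 2 = ∑ i, x i ^ 2 :=
  Real.sq_sqrt (Finset.sum_nonneg fun _ _ => sq_nonneg _)

section Frobenius

attribute [local instance] Matrix.frobeniusNormedAddCommGroup

lemma frobNorm_eq_norm {n m : ℕ} (M : Matrix (Fin n) (Fin m) ℝ) : frobNorm M = ‖M‖ := by
  simp [frobNorm, frobenius_norm_def, Real.sqrt_eq_rpow]

lemma frobNorm_le_frobNorm_add_frobNorm_sub {n m : ℕ} (X Y : Matrix (Fin n) (Fin m) ℝ) :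
    frobNorm Y ≤ frobNorm X + frobNorm (X - Y) := by
  simpa only [frobNorm_eq_norm] using norm_le_norm_add_norm_sub X Y

end Frobenius

lemma eNorm_col_le_frobNorm {n m : ℕ} (X : Matrix (Fin n) (Fin m) ℝ) (t : Fin m) :
    eNorm (fun i => X i t) ≤ frobNorm X :=
  Real.sqrt_le_sqrt <| Finset.sum_le_sum fun i _ =>
    Finset.single_le_sum (f := fun j => X i j ^ 2) (fun _ _ => sq_nonneg _) (Finset.mem_univ t)

lemma sum_sq_mul_sum_sq_le_sum_sq_sum_mul {ι κ : Type*} [Fintype ι] [Fintype κ]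
    {a : ι → ℝ} {w : ι → κ → ℝ} (ha : ∀ t, 0 ≤ a t) (hw : ∀ t j, 0 ≤ w t j) :
    ∑ t, a t ^ 2 * ∑ j, w t j ^ 2 ≤ ∑ j, (∑ t, a t * w t j) ^ 2 :=
  calc ∑ t, a t ^ 2 * ∑ j, w t j ^ 2 = ∑ j, ∑ t, (a t * w t j) ^ 2 := by
        simp only [Finset.mul_sum, mul_pow]
        exact Finset.sum_comm
    _ ≤ ∑ j, (∑ t, a t * w t j) ^ 2 := Finset.sum_le_sum fun j _ =>
        Finset.sum_sq_le_sq_sum_of_nonneg fun t _ => mul_nonneg (ha t) (hw t j)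

lemma frobNorm_mul_diagonal_eNorm_le {n m r : ℕ} {A : Matrix (Fin n) (Fin r) ℝ}
    {W : Matrix (Fin r) (Fin m) ℝ} (hA : ∀ i t, 0 ≤ A i t) (hW : ∀ t j, 0 ≤ W t j) :
    frobNorm (A * diagonal fun t => eNorm (W t)) ≤ frobNorm (A * W) :=
  Real.sqrt_le_sqrt <| Finset.sum_le_sum fun i _ => by
    simp only [mul_diagonal, mul_pow, sq_eNorm]
    simpa only [mul_apply] using sum_sq_mul_sum_sq_le_sum_sq_sum_mul (hA i) hW

theorem stmt15_general {n m r : ℕ} (M : Matrix (Fin n) (Fin m) ℝ)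
    (A : Matrix (Fin n) (Fin r) ℝ) (W : Matrix (Fin r) (Fin m) ℝ)
    (hA : ∀ i j, 0 ≤ A i j) (hW : ∀ i j, 0 ≤ W i j)
    (hWrows : ∀ t : Fin r, W t ≠ 0)
    (ε : ℝ)
    (happrox : frobNorm (M - A * W) ≤ ε * frobNorm M) :
    ∃ (A' : Matrix (Fin n) (Fin r) ℝ) (W' : Matrix (Fin r) (Fin m) ℝ),
      (∀ i j, 0 ≤ A' i j) ∧ (∀ i j, 0 ≤ W' i j) ∧ A' * W' = A * W ∧
      (∀ t : Fin r, eNorm (W' t) = 1) ∧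
      (∀ t : Fin r, eNorm (fun i => A' i t) ≤ (1 + ε) * frobNorm M) ∧
      frobNorm A' ≤ (1 + ε) * frobNorm M := by
  set c : Fin r → ℝ := fun t => eNorm (W t)
  have hc : ∀ t, 0 < c t := fun t => eNorm_pos (hWrows t)
  have hAW : frobNorm (A * W) ≤ (1 + ε) * frobNorm M := by
    linarith [frobNorm_le_frobNorm_add_frobNorm_sub M (A * W)]
  have hA' : frobNorm (A * diagonal c) ≤ (1 + ε) * frobNorm M :=
    (frobNorm_mul_diagonal_eNorm_le hA hW).trans hAW
  refine ⟨A * diagonal c, diagonal c⁻¹ * W, fun i t => ?_, fun t j => ?_, ?_, fun t => ?_,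
    fun t => (eNorm_col_le_frobNorm _ t).trans hA', hA'⟩
  · rw [mul_diagonal]
    exact mul_nonneg (hA i t) (hc t).le
  · rw [diagonal_mul]
    exact mul_nonneg (inv_nonneg.mpr (hc t).le) (hW t j)
  · have hcc : (fun t => c t * c⁻¹ t) = fun _ => 1 := funext fun t => mul_inv_cancel₀ (hc t).ne'
    rw [Matrix.mul_assoc, ← Matrix.mul_assoc (diagonal c), diagonal_mul_diagonal, hcc,
      diagonal_one, Matrix.one_mul]
  · have hrow : (diagonal c⁻¹ * W) t = (c t)⁻¹ • W t := funext fun j => diagonal_mul _ _ t j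
    rw [hrow, eNorm_smul, abs_of_pos (inv_pos.mpr (hc t))]
    exact inv_mul_cancel₀ (hc t).ne'

/-- Normalization lemma: if `‖M - A W‖_F ≤ ε ‖M‖_F` with `A, W`
nonnegative and no row of `W` zero, the factorization can be rescaled so that every row
of `W` has Euclidean norm `1`, every column of `A` has Euclidean norm at most
`(1+ε) ‖M‖_F`, and `‖A‖_F ≤ (1+ε) ‖M‖_F`. -/
theorem stmt15 {n m r : ℕ} (M : Matrix (Fin n) (Fin m) ℝ)
    (A : Matrix (Fin n) (Fin r) ℝ) (W : Matrix (Fin r) (Fin m) ℝ)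
    (hA : ∀ i j, 0 ≤ A i j) (hW : ∀ i j, 0 ≤ W i j)
    (hWrows : ∀ t : Fin r, W t ≠ 0)
    (ε : ℝ) (hε : 0 ≤ ε)
    (happrox : frobNorm (M - A * W) ≤ ε * frobNorm M) :
    ∃ (A' : Matrix (Fin n) (Fin r) ℝ) (W' : Matrix (Fin r) (Fin m) ℝ),
      (∀ i j, 0 ≤ A' i j) ∧ (∀ i j, 0 ≤ W' i j) ∧ A' * W' = A * W ∧
      (∀ t : Fin r, eNorm (W' t) = 1) ∧
      (∀ t : Fin r, eNorm (fun i => A' i t) ≤ (1 + ε) * frobNorm M) ∧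
      frobNorm A' ≤ (1 + ε) * frobNorm M :=
  stmt15_general M A W hA hW hWrows ε happrox
end

section
/- Let A be a nonnegative n×r real matrix and W a nonnegative r×m real matrix. Then for every t ∈ {1,…,r}: ‖A_t‖·‖W^t‖ ≤ ‖A·W‖_F, where ‖A_t‖ and ‖W^t‖ are the Euclidean norms of the t-th column of A and the t-th row of W, respectively. (Equivalently, the Frobenius norm of the rank-one matrix A_t·W^t, which equals ‖A_t‖·‖W^t‖, is at most ‖A·W‖_F.) -/
open Matrix

/-! Every entry of a product of nonnegative matrices dominates each of its summands, so the
`t`-th outer product `A_t W^t` is entrywise below `A W`, and the Frobenius norm is monotone in the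
absolute values of the entries. The Frobenius norm of an outer product factorises into the norms
of its factors. -/

theorem vecMulVec_col_row_le_mul {l m n R : Type*} [Fintype m] [Semiring R] [PartialOrder R]
    [IsOrderedRing R] {A : Matrix l m R} {W : Matrix m n R}
    (hA : ∀ i k, 0 ≤ A i k) (hW : ∀ k j, 0 ≤ W k j) (t : m) (i : l) (j : n) :
    vecMulVec (fun i => A i t) (W t) i j ≤ (A * W) i j := by
  rw [vecMulVec_apply, mul_apply]
  exact Finset.single_le_sum (fun k _ => mul_nonneg (hA i k) (hW k j)) (Finset.mem_univ t)

theorem frobNorm_le_frobNorm {n m : ℕ} {M N : Matrix (Fin n) (Fin m) ℝ}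
    (h : ∀ i j, |M i j| ≤ |N i j|) : frobNorm M ≤ frobNorm N :=
  Real.sqrt_le_sqrt <| Finset.sum_le_sum fun i _ =>
    Finset.sum_le_sum fun j _ => sq_le_sq.mpr (h i j)

theorem frobNorm_vecMulVec {n m : ℕ} (x : Fin n → ℝ) (y : Fin m → ℝ) :
    frobNorm (vecMulVec x y) = eNorm x * eNorm y := by
  rw [frobNorm, eNorm, eNorm, ← Real.sqrt_mul (by positivity), Finset.sum_mul_sum]
  simp only [vecMulVec_apply, mul_pow]

/-- For nonnegative `A` and `W` and each `t`,
`‖A_t‖ ⬝ ‖W^t‖ ≤ ‖A W‖_F`; equivalently, the Frobenius norm of the rank-one outer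
product `A_t · W^t` (which equals `‖A_t‖ ⬝ ‖W^t‖`) is at most `‖A W‖_F`. -/
theorem stmt16 {n m r : ℕ}
    (A : Matrix (Fin n) (Fin r) ℝ) (W : Matrix (Fin r) (Fin m) ℝ)
    (hA : ∀ i j, 0 ≤ A i j) (hW : ∀ i j, 0 ≤ W i j) :
    ∀ t : Fin r,
      eNorm (fun i => A i t) * eNorm (W t) ≤ frobNorm (A * W) ∧
      frobNorm (Matrix.vecMulVec (fun i => A i t) (W t))
        = eNorm (fun i => A i t) * eNorm (W t) := by
  intro t
  have hrank_one := frobNorm_vecMulVec (fun i => A i t) (W t)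
  refine ⟨hrank_one ▸ frobNorm_le_frobNorm fun i j => ?_, hrank_one⟩
  exact abs_le_abs_of_nonneg (mul_nonneg (hA i t) (hW t j))
    (vecMulVec_col_row_le_mul hA hW t i j)
end

section
/- Let A be a nonnegative n×r real matrix and W a nonnegative r×m real matrix such that every row of W has Euclidean norm 1. Then ‖A‖_F ≤ ‖A·W‖_F. -/
open Matrix

/-- Squaring a sum of nonnegative terms only adds nonnegative cross terms. -/
theorem sum_sq_mul_sum_sq_le_sum_sq_vecMul {ι κ : Type*} [Fintype ι] [Fintype κ]
    {a : ι → ℝ} {W : Matrix ι κ ℝ} (ha : ∀ k, 0 ≤ a k) (hW : ∀ k j, 0 ≤ W k j) :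
    ∑ k, a k ^ 2 * ∑ j, W k j ^ 2 ≤ ∑ j, (a ᵥ* W) j ^ 2 :=
  calc ∑ k, a k ^ 2 * ∑ j, W k j ^ 2
      = ∑ j, ∑ k, (a k * W k j) ^ 2 := by
        simp only [Finset.mul_sum, mul_pow]
        exact Finset.sum_comm
    _ ≤ ∑ j, (∑ k, a k * W k j) ^ 2 :=
        Finset.sum_le_sum fun j _ =>
          Finset.sum_sq_le_sq_sum_of_nonneg fun k _ => mul_nonneg (ha k) (hW k j)
    _ = ∑ j, (a ᵥ* W) j ^ 2 := rfl

theorem sum_sq_eq_one_of_eNorm_eq_one {k : ℕ} {x : Fin k → ℝ} (hx : eNorm x = 1) :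
    ∑ i, x i ^ 2 = 1 :=
  Real.sqrt_eq_one.mp hx

/-- If `A` and `W` are nonnegative and every row of `W` has Euclidean
norm `1`, then `‖A‖_F ≤ ‖A W‖_F`. -/
theorem stmt17 {n m r : ℕ}
    (A : Matrix (Fin n) (Fin r) ℝ) (W : Matrix (Fin r) (Fin m) ℝ)
    (hA : ∀ i j, 0 ≤ A i j) (hW : ∀ i j, 0 ≤ W i j)
    (hWrow : ∀ t : Fin r, eNorm (W t) = 1) :
    frobNorm A ≤ frobNorm (A * W) := by
  have hrow (i : Fin n) : ∑ k, A i k ^ 2 ≤ ∑ j, (A * W) i j ^ 2 := by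
    simpa only [sum_sq_eq_one_of_eNorm_eq_one (hWrow _), mul_one, mul_apply_eq_vecMul]
      using sum_sq_mul_sum_sq_le_sum_sq_vecMul (hA i) hW
  exact Real.sqrt_le_sqrt (Finset.sum_le_sum fun i _ => hrow i)
end

section
/- Let M be a nonzero n×m real matrix, W an r×m real matrix, and let ε ≥ 0, δ > 0. Suppose A = Σ_{t=1}^r σ_t·u_t·v_tᵀ where (u_1,…,u_r) is an orthonormal family in ℝ^n, (v_1,…,v_r) is an orthonormal family in ℝ^r, and σ_t ≥ 0 for all t. Assume ‖M − A·W‖_F ≤ ε·‖M‖_F. Let T = { t ∈ {1,…,r} : σ_t ≥ δ·‖M‖_F } (so σ_t > 0 for t ∈ T), define A⁺ = Σ_{t∈T} σ_t⁻¹·v_t·u_tᵀ and W₀ = (Σ_{t∈T} v_t·v_tᵀ)·W. Then W₀ = A⁺·A·W, every row of the r×m matrix A⁺·M lies in the row space of M, and ‖A⁺·M − W₀‖_F ≤ ε/δ. -/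
/-!
On the significant directions `A⁺` inverts `A`: orthonormality of the `u_t` gives
`A⁺ A = ∑_{t ∈ T} v_t v_tᵀ`, hence `W₀ = A⁺ A W` and `A⁺ M - W₀ = A⁺ (M - A W)`. Column by column,
`A⁺ x = ∑_{t ∈ T} σ_t⁻¹ ⟪u_t, x⟫ v_t`; orthonormality of the `v_t`, the bound
`σ_t⁻¹ ≤ (δ ‖M‖_F)⁻¹` on `T` and Bessel's inequality for the `u_t` give
`‖A⁺ x‖ ≤ (δ ‖M‖_F)⁻¹ ‖x‖`, so `‖A⁺ (M - A W)‖_F ≤ (δ ‖M‖_F)⁻¹ ε ‖M‖_F = ε / δ`.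
-/

open Matrix

theorem orthonormal_toLp_of_sum_mul {ι κ : Type*} [Fintype κ] [DecidableEq ι] {u : ι → κ → ℝ}
    (hu : ∀ s t, ∑ i, u s i * u t i = if s = t then 1 else 0) :
    Orthonormal ℝ (fun t ↦ WithLp.toLp 2 (u t) : ι → EuclideanSpace ℝ κ) := by
  rw [orthonormal_iff_ite]
  intro s t
  simpa [EuclideanSpace.inner_toLp_toLp, dotProduct, mul_comm] using hu s t

theorem Orthonormal.norm_sum_smul_inner_le {ι E F : Type*} [NormedAddCommGroup E]
    [InnerProductSpace ℝ E] [NormedAddCommGroup F] [InnerProductSpace ℝ F]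
    {u : ι → E} {v : ι → F} (hu : Orthonormal ℝ u) (hv : Orthonormal ℝ v)
    (T : Finset ι) (a : ι → ℝ) {K : ℝ} (hK : ∀ t ∈ T, |a t| ≤ K) (x : E) :
    ‖∑ t ∈ T, (a t * inner ℝ (u t) x) • v t‖ ^ 2 ≤ K ^ 2 * ‖x‖ ^ 2 :=
  calc ‖∑ t ∈ T, (a t * inner ℝ (u t) x) • v t‖ ^ 2
      = ∑ t ∈ T, a t ^ 2 * inner ℝ (u t) x ^ 2 := by
        rw [← real_inner_self_eq_norm_sq, hv.inner_sum]
        simp only [conj_trivial]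
        exact Finset.sum_congr rfl fun t _ ↦ by ring
    _ ≤ ∑ t ∈ T, K ^ 2 * inner ℝ (u t) x ^ 2 :=
        Finset.sum_le_sum fun t ht ↦ mul_le_mul_of_nonneg_right
          (sq_le_sq.2 ((hK t ht).trans (le_abs_self K))) (sq_nonneg _)
    _ ≤ K ^ 2 * ‖x‖ ^ 2 := by
        rw [← Finset.mul_sum]
        gcongr
        simpa only [Real.norm_eq_abs, sq_abs] using hu.sum_inner_products_le x (s := T)

theorem sum_smul_vecMulVec_mulVec {ι κ ν : Type*} [Fintype κ] (T : Finset ι) (a : ι → ℝ)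
    (v : ι → ν → ℝ) (u : ι → κ → ℝ) (x : κ → ℝ) :
    (∑ t ∈ T, a t • vecMulVec (v t) (u t)) *ᵥ x = ∑ t ∈ T, (a t * (u t ⬝ᵥ x)) • v t := by
  simp [sum_mulVec, smul_mulVec, vecMulVec_mulVec, mul_smul]

theorem frobNorm_sq {n m : ℕ} (X : Matrix (Fin n) (Fin m) ℝ) :
    frobNorm X ^ 2 = ∑ j, ‖(WithLp.toLp 2 (Xᵀ j) : EuclideanSpace ℝ (Fin n))‖ ^ 2 := by
  simp only [frobNorm, EuclideanSpace.real_norm_sq_eq]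
  rw [Real.sq_sqrt (by positivity), Finset.sum_comm]
  rfl

theorem frobNorm_pos {n m : ℕ} {M : Matrix (Fin n) (Fin m) ℝ} (hM : M ≠ 0) :
    0 < frobNorm M := by
  obtain ⟨i, j, hij⟩ : ∃ i j, M i j ≠ 0 := by
    by_contra! h
    exact hM (Matrix.ext h)
  refine Real.sqrt_pos.2 ((sq_pos_of_ne_zero hij).trans_le ?_)
  calc M i j ^ 2 ≤ ∑ j, M i j ^ 2 :=
        Finset.single_le_sum (fun j _ ↦ sq_nonneg (M i j)) (Finset.mem_univ j)
    _ ≤ ∑ i, ∑ j, M i j ^ 2 :=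
        Finset.single_le_sum (f := fun i ↦ ∑ j, M i j ^ 2) (fun i _ ↦ by positivity)
          (Finset.mem_univ i)

theorem frobNorm_sum_smul_vecMulVec_mul_le {ι : Type*} [DecidableEq ι] {n r m : ℕ}
    {u : ι → Fin n → ℝ} {v : ι → Fin r → ℝ}
    (hu : ∀ s t, ∑ i, u s i * u t i = if s = t then 1 else 0)
    (hv : ∀ s t, ∑ i, v s i * v t i = if s = t then 1 else 0)
    (T : Finset ι) (a : ι → ℝ) {K : ℝ} (hK0 : 0 ≤ K) (hK : ∀ t ∈ T, |a t| ≤ K)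
    (E : Matrix (Fin n) (Fin m) ℝ) :
    frobNorm ((∑ t ∈ T, a t • vecMulVec (v t) (u t)) * E) ≤ K * frobNorm E := by
  have hcol : ∀ j,
      ‖(WithLp.toLp 2 (((∑ t ∈ T, a t • vecMulVec (v t) (u t)) * E)ᵀ j) :
        EuclideanSpace ℝ (Fin r))‖ ^ 2 ≤
      K ^ 2 * ‖(WithLp.toLp 2 (Eᵀ j) : EuclideanSpace ℝ (Fin n))‖ ^ 2 := by
    intro j
    rw [show ((∑ t ∈ T, a t • vecMulVec (v t) (u t)) * E)ᵀ j =
        (∑ t ∈ T, a t • vecMulVec (v t) (u t)) *ᵥ Eᵀ j from rfl,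
      sum_smul_vecMulVec_mulVec, WithLp.toLp_sum]
    simpa only [WithLp.toLp_smul, EuclideanSpace.inner_toLp_toLp, star_trivial,
      dotProduct_comm (Eᵀ j)] using
      (orthonormal_toLp_of_sum_mul hu).norm_sum_smul_inner_le (orthonormal_toLp_of_sum_mul hv)
        T a hK (WithLp.toLp 2 (Eᵀ j))
  refine le_of_pow_le_pow_left₀ two_ne_zero (mul_nonneg hK0 (Real.sqrt_nonneg _)) ?_
  rw [mul_pow, frobNorm_sq, frobNorm_sq, Finset.mul_sum]
  exact Finset.sum_le_sum fun j _ ↦ hcol j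

theorem sum_smul_vecMulVec_mul_sum_smul_vecMulVec {ι κ μ ν : Type*} [Fintype ι] [DecidableEq ι]
    [Fintype κ] {u : ι → κ → ℝ} (hu : ∀ s t, ∑ i, u s i * u t i = if s = t then 1 else 0)
    (S : Finset ι) (a b : ι → ℝ) (v : ι → μ → ℝ) (w : ι → ν → ℝ) :
    (∑ s ∈ S, a s • vecMulVec (v s) (u s)) * (∑ t, b t • vecMulVec (u t) (w t)) =
      ∑ s ∈ S, (a s * b s) • vecMulVec (v s) (w s) := by
  rw [Matrix.sum_mul]
  refine Finset.sum_congr rfl fun s _ ↦ ?_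
  have hrow : u s ᵥ* ∑ t, b t • vecMulVec (u t) (w t) = b s • w s := by
    simp [Matrix.vecMul_sum, vecMul_smul, vecMul_vecMulVec, dotProduct, hu]
  rw [Matrix.smul_mul, vecMulVec_mul, hrow, vecMulVec_smul, smul_smul]

theorem mul_apply_mem_span_range {R l m n : Type*} [CommSemiring R] [Fintype m]
    (B : Matrix l m R) (M : Matrix m n R) (t : l) :
    (B * M) t ∈ Submodule.span R (Set.range M) :=
  (Submodule.mem_span_range_iff_exists_fun R).2 ⟨B t, by rw [mul_apply_eq_vecMul, vecMul_eq_sum]⟩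

theorem stmt19_general {n m r : ℕ} (M : Matrix (Fin n) (Fin m) ℝ) (hM0 : M ≠ 0)
    (W : Matrix (Fin r) (Fin m) ℝ)
    (ε δ : ℝ) (hδ : 0 < δ)
    (σ : Fin r → ℝ) (u : Fin r → Fin n → ℝ) (v : Fin r → Fin r → ℝ)
    (hu : ∀ s t : Fin r, ∑ i, u s i * u t i = if s = t then 1 else 0)
    (hv : ∀ s t : Fin r, ∑ i, v s i * v t i = if s = t then 1 else 0)
    (A : Matrix (Fin n) (Fin r) ℝ)
    (hA : A = ∑ t, σ t • Matrix.vecMulVec (u t) (v t))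
    (happrox : frobNorm (M - A * W) ≤ ε * frobNorm M)
    (T : Finset (Fin r)) (hT : ∀ t, t ∈ T ↔ δ * frobNorm M ≤ σ t)
    (Aplus : Matrix (Fin r) (Fin n) ℝ)
    (hAplus : Aplus = ∑ t ∈ T, (σ t)⁻¹ • Matrix.vecMulVec (v t) (u t))
    (W₀ : Matrix (Fin r) (Fin m) ℝ)
    (hW₀ : W₀ = (∑ t ∈ T, Matrix.vecMulVec (v t) (v t)) * W) :
    W₀ = Aplus * (A * W) ∧
    (∀ t : Fin r, (Aplus * M) t ∈ Submodule.span ℝ (Set.range M)) ∧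
    frobNorm (Aplus * M - W₀) ≤ ε / δ := by
  have hthreshold : 0 < δ * frobNorm M := mul_pos hδ (frobNorm_pos hM0)
  have hσT : ∀ t ∈ T, 0 < σ t := fun t ht ↦ hthreshold.trans_le ((hT t).1 ht)
  have hW₀A : W₀ = Aplus * (A * W) := by
    rw [hW₀, hAplus, hA, ← Matrix.mul_assoc, sum_smul_vecMulVec_mul_sum_smul_vecMulVec hu]
    exact congrArg (· * W) <| Finset.sum_congr rfl fun t ht ↦ by
      rw [inv_mul_cancel₀ (hσT t ht).ne', one_smul]
  refine ⟨hW₀A, fun t ↦ mul_apply_mem_span_range Aplus M t, ?_⟩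
  have hinv : ∀ t ∈ T, |(σ t)⁻¹| ≤ (δ * frobNorm M)⁻¹ := fun t ht ↦ by
    rw [abs_inv, abs_of_pos (hσT t ht)]
    exact inv_anti₀ hthreshold ((hT t).1 ht)
  calc frobNorm (Aplus * M - W₀) = frobNorm (Aplus * (M - A * W)) := by
        rw [hW₀A, Matrix.mul_sub]
    _ ≤ (δ * frobNorm M)⁻¹ * frobNorm (M - A * W) := by
        rw [hAplus]
        exact frobNorm_sum_smul_vecMulVec_mul_le hu hv T _ (inv_nonneg.2 hthreshold.le) hinv _
    _ ≤ (δ * frobNorm M)⁻¹ * (ε * frobNorm M) := by gcongr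
    _ = ε / δ := by field_simp [(frobNorm_pos hM0).ne']

/-- With `A⁺` the pseudo-inverse of the truncation of the SVD of `A`
to the significant singular values (`σ_t ≥ δ ‖M‖_F`), one has `W₀ = A⁺ A W`, every row
of `A⁺ M` lies in the row space of `M`, and `‖A⁺ M - W₀‖_F ≤ ε / δ`. -/
theorem stmt19 {n m r : ℕ} (M : Matrix (Fin n) (Fin m) ℝ) (hM0 : M ≠ 0)
    (W : Matrix (Fin r) (Fin m) ℝ)
    (ε δ : ℝ) (hε : 0 ≤ ε) (hδ : 0 < δ)
    (σ : Fin r → ℝ) (u : Fin r → Fin n → ℝ) (v : Fin r → Fin r → ℝ)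
    (hu : ∀ s t : Fin r, ∑ i, u s i * u t i = if s = t then 1 else 0)
    (hv : ∀ s t : Fin r, ∑ i, v s i * v t i = if s = t then 1 else 0)
    (hσ : ∀ t, 0 ≤ σ t)
    (A : Matrix (Fin n) (Fin r) ℝ)
    (hA : A = ∑ t, σ t • Matrix.vecMulVec (u t) (v t))
    (happrox : frobNorm (M - A * W) ≤ ε * frobNorm M)
    (T : Finset (Fin r)) (hT : ∀ t, t ∈ T ↔ δ * frobNorm M ≤ σ t)
    (Aplus : Matrix (Fin r) (Fin n) ℝ)
    (hAplus : Aplus = ∑ t ∈ T, (σ t)⁻¹ • Matrix.vecMulVec (v t) (u t))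
    (W₀ : Matrix (Fin r) (Fin m) ℝ)
    (hW₀ : W₀ = (∑ t ∈ T, Matrix.vecMulVec (v t) (v t)) * W) :
    W₀ = Aplus * (A * W) ∧
    (∀ t : Fin r, (Aplus * M) t ∈ Submodule.span ℝ (Set.range M)) ∧
    frobNorm (Aplus * M - W₀) ≤ ε / δ :=
  stmt19_general M hM0 W ε δ hδ σ u v hu hv A hA happrox T hT Aplus hAplus W₀ hW₀
end
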